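/- Let η_0 > 0, T ≥ 0, 0 ≤ t ≤ T, and let f : ℝ → ℂ be an integrable function with f(η) = 0 for all |η| > η_0. Then for every x ∈ ℝ and every p ≥ η_0²(T - t), e^{p} ∫_ℝ e^{-|p + η²(t-T)|} f(η) e^{-i x η} dη = ∫_ℝ e^{η²(T-t)} f(η) e^{-i x η} dη. -/

import Mathlib

/-!
On the band `|η| ≤ η₀` the exponent `p + η²(t - T)` is nonnegative once `p ≥ η₀²(T - t)`,
so the absolute value drops and `eᵖ e^{-(p + η²(t - T))} = e^{η²(T - t)}`; off the band `f`
vanishes. Hence the two integrands agree pointwise.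
-/

open MeasureTheory Complex

theorem Real.exp_mul_exp_neg_abs_sub_of_le {a p : ℝ} (h : a ≤ p) :
    Real.exp p * Real.exp (-|p - a|) = Real.exp a := by
  rw [abs_of_nonneg (sub_nonneg.mpr h), ← Real.exp_add]
  ring_nf

theorem sq_mul_le_sq_mul_of_abs_le {η η0 s : ℝ} (hη : |η| ≤ η0) (hs : 0 ≤ s) :
    η ^ 2 * s ≤ η0 ^ 2 * s :=
  mul_le_mul_of_nonneg_right (sq_le_sq' (abs_le.mp hη).1 (abs_le.mp hη).2) hs

theorem band_limited_exact_recovery_general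
    (η0 T t : ℝ) (htT : t ≤ T)
    (f : ℝ → ℂ)
    (hband : ∀ η : ℝ, η0 < |η| → f η = 0)
    (x p : ℝ) (hp : η0 ^ 2 * (T - t) ≤ p) :
    (Real.exp p : ℂ) *
        ∫ η : ℝ, (Real.exp (-|p + η ^ 2 * (t - T)|) : ℂ) * f η *
          Complex.exp (-Complex.I * x * η) =
      ∫ η : ℝ, (Real.exp (η ^ 2 * (T - t)) : ℂ) * f η *
        Complex.exp (-Complex.I * x * η) := by
  rw [← integral_const_mul]
  congr 1 with η
  rcases eq_or_ne (f η) 0 with hfη | hfη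
  · simp [hfη]
  have hη : η ^ 2 * (T - t) ≤ p :=
    (sq_mul_le_sq_mul_of_abs_le (not_lt.mp (mt (hband η) hfη)) (sub_nonneg.mpr htT)).trans hp
  have hweight : Real.exp p * Real.exp (-|p + η ^ 2 * (t - T)|) = Real.exp (η ^ 2 * (T - t)) := by
    rw [show p + η ^ 2 * (t - T) = p - η ^ 2 * (T - t) by ring]
    exact Real.exp_mul_exp_neg_abs_sub_of_le hη
  rw [← hweight]
  push_cast
  ring

/-- Exact recovery for band-limited data: if `f = û_T` vanishes for `|η| > η₀`, then
for every `p ≥ η₀²(T-t)` the Schrödingerised solution reproduces the exact solution: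
`eᵖ ∫ e^{-|p+η²(t-T)|} f(η) e^{-ixη} dη = ∫ e^{η²(T-t)} f(η) e^{-ixη} dη`. -/
theorem band_limited_exact_recovery
    (η0 T t : ℝ) (hη0 : 0 < η0) (hT : 0 ≤ T) (ht0 : 0 ≤ t) (htT : t ≤ T)
    (f : ℝ → ℂ) (hf : Integrable f)
    (hband : ∀ η : ℝ, η0 < |η| → f η = 0)
    (x p : ℝ) (hp : η0 ^ 2 * (T - t) ≤ p) :
    (Real.exp p : ℂ) *
        ∫ η : ℝ, (Real.exp (-|p + η ^ 2 * (t - T)|) : ℂ) * f η *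
          Complex.exp (-Complex.I * x * η) =
      ∫ η : ℝ, (Real.exp (η ^ 2 * (T - t)) : ℂ) * f η *
        Complex.exp (-Complex.I * x * η) :=
  band_limited_exact_recovery_general η0 T t htT f hband x p hp
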